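/- arXiv:2409.04663 — 3 statements merged into one kernel-verified Lean document; each statement's English description precedes it below -/
import Mathlib

section
/- The boundary steady state u₁ = (u₁ˢ, 0, 0, ỹ₁ˢ) is not a critical point of the free energy along the direction s = (-1, 1, 0, 0): the one-sided derivative d/dδ E[u₁ + δ s] = ln δ + σ_v - ln(u₁ˢ - δ) - σ_u tends to -∞ as δ → 0⁺. -/
open Filter

/-- The boundary steady state is not a critical point of the free energy along the
direction `s = (-1, 1, 0, 0)`: the one-sided derivative
`d/dδ E[u₁ + δ s] = ln δ + σ_v - ln(u₁ˢ - δ) - σ_u` tends to `-∞` as `δ → 0⁺`. -/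
theorem boundary_not_critical (ε k f C u1s : ℝ) (hε : 0 < ε) (hk : 0 < k) (hf : 0 < f)
    (hC : 0 < C) (hu1s : u1s = ε * C / (ε + f)) :
    Tendsto (fun δ : ℝ => Real.log δ + Real.log ε - Real.log (u1s - δ) - 0)
      (nhdsWithin 0 (Set.Ioi 0)) atBot := by
  have hu : 0 < u1s := by
    rw [hu1s]; positivity
  have h1 : Tendsto (fun δ : ℝ => Real.log δ) (nhdsWithin 0 (Set.Ioi 0)) atBot :=
    Real.tendsto_log_nhdsNE_zero.mono_left
      (nhdsWithin_mono _ fun x hx => ne_of_gt hx)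
  have h2 : Tendsto (fun δ : ℝ => Real.log ε - Real.log (u1s - δ) - 0)
      (nhdsWithin 0 (Set.Ioi 0)) (nhds (Real.log ε - Real.log (u1s - 0) - 0)) := by
    apply Tendsto.mono_left _ nhdsWithin_le_nhds
    refine (tendsto_const_nhds.sub ?_).sub tendsto_const_nhds
    exact (Real.continuousAt_log (by simpa using hu.ne')).tendsto.comp
      (tendsto_const_nhds.sub tendsto_id)
  have := h2.add_atBot h1
  convert this using 2 with δ
  ring
end

section
/- For the spatially homogeneous variational Gray-Scott ODE system, the free energy E(u, v, p, ỹ) = Σ_α α(ln α - 1) + σ_α α (α ∈ {u, v, p, ỹ}, ỹ = y/ε) is non-increasing along strictly positive solutions: dE/dt = -(uv² - εv³)(ln(uv²) - ln(εv³)) - ((k+f)v - εp)(ln((k+f)v) - ln(εp)) - (fu - y)(ln(fu) - ln(εỹ)) ≤ 0, since each term has the form -(a - b)(ln a - ln b) ≤ 0. -/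
lemma ent_deriv (g : ℝ → ℝ) (g' : ℝ) (t : ℝ) (hg : HasDerivAt g g' t) (hpos : 0 < g t) :
    HasDerivAt (fun s => g s * (Real.log (g s) - 1)) (g' * Real.log (g t)) t := by
  have h1 := (Real.hasDerivAt_log hpos.ne').comp t hg
  have h2 := hg.mul (h1.sub_const 1)
  refine h2.congr_deriv ?_
  simp only [Function.comp_apply]
  field_simp
  ring

lemma diss_nonneg (a b : ℝ) (ha : 0 < a) (hb : 0 < b) :
    0 ≤ (a - b) * (Real.log a - Real.log b) := by
  rcases le_total a b with h | h
  · have hl : Real.log a ≤ Real.log b := Real.log_le_log ha h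
    nlinarith [mul_nonneg (by linarith : (0:ℝ) ≤ b - a) (by linarith : (0:ℝ) ≤ Real.log b - Real.log a)]
  · have hl : Real.log b ≤ Real.log a := Real.log_le_log hb h
    exact mul_nonneg (by linarith) (by linarith)

/-- For the spatially homogeneous variational Gray–Scott ODE system, the free energy
`E = Σ_α α(ln α - 1) + σ_α α` (with `ỹ = y/ε`) is non-increasing along strictly
positive solutions: `dE/dt` equals a sum of terms of the form `-(a-b)(ln a - ln b)`,
hence is `≤ 0`. -/
theorem free_energy_dissipation (ε k f : ℝ) (hε : 0 < ε) (hk : 0 < k) (hf : 0 < f)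
    (u v p y : ℝ → ℝ)
    (hupos : ∀ t, 0 < u t) (hvpos : ∀ t, 0 < v t) (hppos : ∀ t, 0 < p t)
    (hypos : ∀ t, 0 < y t)
    (hu : ∀ t, HasDerivAt u (-(u t * (v t) ^ 2 - ε * (v t) ^ 3) - f * u t + y t) t)
    (hv : ∀ t, HasDerivAt v ((u t * (v t) ^ 2 - ε * (v t) ^ 3) - (k + f) * v t + ε * p t) t)
    (hp : ∀ t, HasDerivAt p ((k + f) * v t - ε * p t) t)
    (hy : ∀ t, HasDerivAt y (ε * (f * u t - y t)) t)
    (E : ℝ → ℝ)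
    (hE : ∀ t, E t =
      u t * (Real.log (u t) - 1) + 0 * u t
        + v t * (Real.log (v t) - 1) + Real.log ε * v t
        + p t * (Real.log (p t) - 1) + (2 * Real.log ε - Real.log (k + f)) * p t
        + (y t / ε) * (Real.log (y t / ε) - 1) + (Real.log ε - Real.log f) * (y t / ε)) :
    ∀ t : ℝ,
      HasDerivAt E
        (-(u t * (v t) ^ 2 - ε * (v t) ^ 3)
            * (Real.log (u t * (v t) ^ 2) - Real.log (ε * (v t) ^ 3))
          - ((k + f) * v t - ε * p t)
            * (Real.log ((k + f) * v t) - Real.log (ε * p t))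
          - (f * u t - y t)
            * (Real.log (f * u t) - Real.log (ε * (y t / ε)))) t ∧
      (-(u t * (v t) ^ 2 - ε * (v t) ^ 3)
            * (Real.log (u t * (v t) ^ 2) - Real.log (ε * (v t) ^ 3))
          - ((k + f) * v t - ε * p t)
            * (Real.log ((k + f) * v t) - Real.log (ε * p t))
          - (f * u t - y t)
            * (Real.log (f * u t) - Real.log (ε * (y t / ε)))) ≤ 0 := by
  intro t
  have hut := hupos t; have hvt := hvpos t; have hpt := hppos t; have hyt := hypos t
  constructor
  · -- derivative
    have hEeq : E = fun t =>
      u t * (Real.log (u t) - 1) + 0 * u t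
        + v t * (Real.log (v t) - 1) + Real.log ε * v t
        + p t * (Real.log (p t) - 1) + (2 * Real.log ε - Real.log (k + f)) * p t
        + (y t / ε) * (Real.log (y t / ε) - 1) + (Real.log ε - Real.log f) * (y t / ε) :=
      funext hE
    have hyd : HasDerivAt (fun s => y s / ε) (f * u t - y t) t := by
      have := (hy t).div_const ε
      refine this.congr_deriv ?_
      field_simp
    have hytpos : 0 < y t / ε := div_pos hyt hε
    have h1 := ent_deriv u _ t (hu t) hut
    have h2 := ent_deriv v _ t (hv t) hvt
    have h3 := ent_deriv p _ t (hp t) hpt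
    have h4 := ent_deriv (fun s => y s / ε) _ t hyd hytpos
    have h5 := (hu t).const_mul (0:ℝ)
    have h6 := (hv t).const_mul (Real.log ε)
    have h7 := (hp t).const_mul (2 * Real.log ε - Real.log (k + f))
    have h8 := hyd.const_mul (Real.log ε - Real.log f)
    have hD := ((((((h1.add h5).add h2).add h6).add h3).add h7).add h4).add h8
    rw [hEeq]
    refine hD.congr_deriv ?_
    rw [Real.log_mul hut.ne' (by positivity), Real.log_mul hε.ne' (by positivity),
      Real.log_mul (by positivity) hvt.ne', Real.log_mul hε.ne' hpt.ne',
      Real.log_mul hf.ne' hut.ne', Real.log_mul hε.ne' (by positivity),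
      Real.log_pow, Real.log_pow, Real.log_div hyt.ne' hε.ne']
    push_cast
    ring
  · -- nonpositivity
    have t1 := diss_nonneg (u t * (v t)^2) (ε * (v t)^3) (by positivity) (by positivity)
    have t2 := diss_nonneg ((k+f) * v t) (ε * p t) (by positivity) (by positivity)
    have t3 := diss_nonneg (f * u t) (ε * (y t / ε)) (by positivity) (by positivity)
    have hyy : ε * (y t / ε) = y t := by field_simp
    rw [hyy] at t3 ⊢
    linarith
end

section
/- The system of equations (u₁ˢ - δ₁ - δ₃)/(δ₁ - δ₂) = ε, (δ₁ - δ₂)/δ₂ = ε/(f+k), ε(u₁ˢ - δ₁ - δ₃)/(y₁ˢ + εδ₃) = ε/f in the unknowns (δ₁, δ₂, δ₃), where u₁ˢ = εC/(ε+f) and y₁ˢ = fεC/(ε+f), has a unique solution with δ₁ - δ₂ ≠ 0, and this solution satisfies u₁ + δ₁(-1,1,0,0) + δ₂(0,-1,1,0) + δ₃(-1,0,0,ε) = u₂, where u₂ is the interior steady state. -/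
/-- The critical-point system `(u₁ˢ - δ₁ - δ₃)/(δ₁ - δ₂) = ε`,
`(δ₁ - δ₂)/δ₂ = ε/(f+k)`, `ε(u₁ˢ - δ₁ - δ₃)/(y₁ˢ + εδ₃) = ε/f` has a unique solution
with `δ₁ - δ₂ ≠ 0`, and this solution satisfies
`u₁ + δ₁(-1,1,0,0) + δ₂(0,-1,1,0) + δ₃(-1,0,0,ε) = u₂`. -/
theorem unique_critical_perturbation (ε k f C lam u1s y1s : ℝ)
    (hε : 0 < ε) (hk : 0 < k) (hf : 0 < f) (hC : 0 < C)
    (hlam : lam = ε + 1 + (k + f) / ε + f)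
    (hu1s : u1s = ε * C / (ε + f)) (hy1s : y1s = f * ε * C / (ε + f)) :
    (∃! d : ℝ × ℝ × ℝ, d.1 - d.2.1 ≠ 0 ∧
        (u1s - d.1 - d.2.2) / (d.1 - d.2.1) = ε ∧
        (d.1 - d.2.1) / d.2.1 = ε / (f + k) ∧
        ε * (u1s - d.1 - d.2.2) / (y1s + ε * d.2.2) = ε / f) ∧
      ∀ d : ℝ × ℝ × ℝ, (d.1 - d.2.1 ≠ 0 ∧
          (u1s - d.1 - d.2.2) / (d.1 - d.2.1) = ε ∧
          (d.1 - d.2.1) / d.2.1 = ε / (f + k) ∧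
          ε * (u1s - d.1 - d.2.2) / (y1s + ε * d.2.2) = ε / f) →
        (u1s - d.1 - d.2.2, d.1 - d.2.1, d.2.1, y1s + ε * d.2.2)
          = (ε * C / lam, C / lam, (k + f) * C / (ε * lam), f * ε * C / lam) := by
  have hεf : (0:ℝ) < ε + f := by linarith
  have hfk : (0:ℝ) < f + k := by linarith
  have hlampos : 0 < lam := by rw [hlam]; positivity
  have hlamε : ε * lam = ε^2 + ε + (k + f) + f * ε := by
    rw [hlam]; field_simp
  have hεuy : ε * u1s + y1s = ε * C := by
    rw [hu1s, hy1s]; field_simp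
  -- key : any solution yields the target tuple
  have key2 : ∀ d : ℝ × ℝ × ℝ, (d.1 - d.2.1 ≠ 0 ∧
          (u1s - d.1 - d.2.2) / (d.1 - d.2.1) = ε ∧
          (d.1 - d.2.1) / d.2.1 = ε / (f + k) ∧
          ε * (u1s - d.1 - d.2.2) / (y1s + ε * d.2.2) = ε / f) →
        (u1s - d.1 - d.2.2, d.1 - d.2.1, d.2.1, y1s + ε * d.2.2)
          = (ε * C / lam, C / lam, (k + f) * C / (ε * lam), f * ε * C / lam) := by
    rintro ⟨δ1, δ2, δ3⟩ ⟨hBne, h1, h2, h3⟩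
    simp only at hBne h1 h2 h3 ⊢
    have e1 : u1s - δ1 - δ3 = ε * (δ1 - δ2) := (div_eq_iff hBne).mp h1
    have hδ2 : δ2 ≠ 0 := by
      intro h
      rw [h, div_zero] at h2
      exact absurd h2.symm (ne_of_gt (by positivity))
    have e2 : (δ1 - δ2) * (f + k) = ε * δ2 := (div_eq_div_iff hδ2 hfk.ne').mp h2
    have hden3 : y1s + ε * δ3 ≠ 0 := by
      intro h
      rw [h, div_zero] at h3
      exact absurd h3.symm (ne_of_gt (by positivity))
    have e3 : (u1s - δ1 - δ3) * f = y1s + ε * δ3 := by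
      have h := (div_eq_div_iff hden3 hf.ne').mp h3
      have h' : ε * ((u1s - δ1 - δ3) * f) = ε * (y1s + ε * δ3) := by linear_combination h
      exact mul_left_cancel₀ hε.ne' h'
    have hB' : ε * ((δ1 - δ2) * lam) = ε * C := by
      linear_combination (δ1 - δ2) * hlamε + hεuy - (ε + f) * e1 + e2 + e3
    have hBl : (δ1 - δ2) * lam = C := mul_left_cancel₀ hε.ne' hB'
    refine Prod.ext ?_ (Prod.ext ?_ (Prod.ext ?_ ?_)) <;> simp only
    · rw [eq_div_iff hlampos.ne']
      linear_combination lam * e1 + ε * hBl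
    · rw [eq_div_iff hlampos.ne']
      exact hBl
    · rw [eq_div_iff (by positivity : ε * lam ≠ 0)]
      linear_combination (f + k) * hBl - lam * e2
    · rw [eq_div_iff hlampos.ne']
      linear_combination f * lam * e1 + f * ε * hBl - lam * e3
  -- explicit solution, introduced as opaque constants
  obtain ⟨δ2₀, hδ2₀⟩ : ∃ x : ℝ, x = (k + f) * C / (ε * lam) := ⟨_, rfl⟩
  obtain ⟨δ1₀, hδ1₀⟩ : ∃ x : ℝ, x = C / lam + δ2₀ := ⟨_, rfl⟩
  obtain ⟨δ3₀, hδ3₀⟩ : ∃ x : ℝ, x = f * C / lam - y1s / ε := ⟨_, rfl⟩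
  have hB0 : δ1₀ - δ2₀ = C / lam := by rw [hδ1₀]; ring
  have hB0pos : (0:ℝ) < C / lam := by positivity
  have hA : u1s - δ1₀ - δ3₀ = ε * C / lam := by
    rw [eq_div_iff hlampos.ne', hδ1₀, hδ2₀, hδ3₀]
    have e : y1s / ε = C - u1s := by
      rw [div_eq_iff hε.ne']; linear_combination hεuy
    rw [e]
    have h1 : C / lam * lam = C := div_mul_cancel₀ C hlampos.ne'
    have h2 : (k + f) * C / (ε * lam) * lam = (k + f) * C / ε := by
      rw [← div_div, div_mul_cancel₀ _ hlampos.ne']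
    have h3 : f * C / lam * lam = f * C := div_mul_cancel₀ _ hlampos.ne'
    linear_combination -h1 - h2 - h3 + C * hlam
  have hY : y1s + ε * δ3₀ = f * ε * C / lam := by
    rw [hδ3₀]; field_simp; ring
  have hd₀P : ((δ1₀, δ2₀, δ3₀) : ℝ × ℝ × ℝ).1 - (δ1₀, δ2₀, δ3₀).2.1 ≠ 0 ∧
      (u1s - (δ1₀, δ2₀, δ3₀).1 - (δ1₀, δ2₀, δ3₀).2.2) / ((δ1₀, δ2₀, δ3₀).1 - (δ1₀, δ2₀, δ3₀).2.1) = ε ∧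
      ((δ1₀, δ2₀, δ3₀).1 - (δ1₀, δ2₀, δ3₀).2.1) / (δ1₀, δ2₀, δ3₀).2.1 = ε / (f + k) ∧
      ε * (u1s - (δ1₀, δ2₀, δ3₀).1 - (δ1₀, δ2₀, δ3₀).2.2) / (y1s + ε * (δ1₀, δ2₀, δ3₀).2.2) = ε / f := by
    simp only
    refine ⟨by rw [hB0]; exact hB0pos.ne', ?_, ?_, ?_⟩
    · rw [hA, hB0]
      rw [div_eq_iff hB0pos.ne']
      field_simp
    · rw [hB0, hδ2₀]
      rw [div_eq_div_iff (by positivity : ((k + f) * C / (ε * lam) : ℝ) ≠ 0) hfk.ne']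
      field_simp
      ring
    · rw [hA, hY]
      rw [div_eq_div_iff (by positivity : (f * ε * C / lam : ℝ) ≠ 0) hf.ne']
      field_simp
  refine ⟨⟨(δ1₀, δ2₀, δ3₀), hd₀P, ?_⟩, key2⟩
  rintro ⟨δ1, δ2, δ3⟩ hd
  have hT := key2 _ hd
  have hT₀ := key2 _ hd₀P
  simp only [Prod.mk.injEq] at hT hT₀
  obtain ⟨t1, t2, t3, t4⟩ := hT
  obtain ⟨s1, s2, s3, s4⟩ := hT₀
  refine Prod.ext ?_ (Prod.ext ?_ ?_) <;> simp only
  · linarith [t2, t3, s2, s3]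
  · rw [t3, ← s3]
  · have h4 : ε * δ3 = ε * δ3₀ := by linarith [t4, s4]
    exact mul_left_cancel₀ hε.ne' h4
end
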